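/- arXiv:1006.4621 — 4 statements merged into one kernel-verified Lean document; each statement's English description precedes it below -/
import Mathlib

section
/- (Hennessy–Milner-type theorem for EL) On finite relational models, EL-similarity coincides with EL-simulation: if M₁ and M₂ are finite, then u is EL-similar to v if and only if there exists an EL-simulation Z between M₁ and M₂ with u Z v. -/
inductive EL (P R : Type) : Type
  | top : EL P R
  | atom : P → EL P R
  | and : EL P R → EL P R → EL P R
  | ex : R → EL P R → EL P R

/-- Semantics of EL over a relational model given by `up` (unary relations)
and `br` (binary relations). -/
def elSat {P R W : Type} (up : P → Set W) (br : R → Set (W × W)) : EL P R → Set W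
  | .top => Set.univ
  | .atom p => up p
  | .and a b => elSat up br a ∩ elSat up br b
  | .ex r a => {u | ∃ v, (u, v) ∈ br r ∧ v ∈ elSat up br a}

/-- `Z` is an EL-simulation: it satisfies (atom_L) and (zig). -/
def IsELSim {P R W₁ W₂ : Type} (up₁ : P → Set W₁) (br₁ : R → Set (W₁ × W₁))
    (up₂ : P → Set W₂) (br₂ : R → Set (W₂ × W₂)) (Z : Set (W₁ × W₂)) : Prop :=
  (∀ u v p, (u, v) ∈ Z → u ∈ up₁ p → v ∈ up₂ p) ∧
  (∀ u v u' r, (u, v) ∈ Z → (u, u') ∈ br₁ r →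
    ∃ v', (v, v') ∈ br₂ r ∧ (u', v') ∈ Z)

/-!
Simulations preserve EL formulas by induction on the formula. Conversely, EL-similarity is
itself a simulation when every world of `M₂` has finitely many successors: if a successor `u'`
of `u` had no similar successor of `v`, the finitely many successors of `v` could each be refuted
by a formula true at `u'`; the existential of their conjunction then holds at `u` but not at `v`.
-/

section

variable {P R W₁ W₂ : Type} (up₁ : P → Set W₁) (br₁ : R → Set (W₁ × W₁))
    (up₂ : P → Set W₂) (br₂ : R → Set (W₂ × W₂))

def ELSimilar : Set (W₁ × W₂) :=
  {p | ∀ γ : EL P R, p.1 ∈ elSat up₁ br₁ γ → p.2 ∈ elSat up₂ br₂ γ}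

variable {up₁ br₁ up₂ br₂}

theorem IsELSim.subset_elSimilar {Z : Set (W₁ × W₂)} (hZ : IsELSim up₁ br₁ up₂ br₂ Z) :
    Z ⊆ ELSimilar up₁ br₁ up₂ br₂ := by
  obtain ⟨hatom, hzig⟩ := hZ
  rintro ⟨u, v⟩ huv γ
  induction γ generalizing u v with
  | top => exact id
  | atom p => exact hatom u v p huv
  | and γ δ ihγ ihδ => exact fun h => ⟨ihγ u v huv h.1, ihδ u v huv h.2⟩
  | ex r γ ih =>
    rintro ⟨u', hr, hu'⟩
    obtain ⟨v', hv', huv'⟩ := hzig u v u' r huv hr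
    exact ⟨v', hv', ih u' v' huv' hu'⟩

theorem exists_elSat_forall_notMem_of_finite (u : W₁) {s : Set W₂} (hs : s.Finite)
    (h : ∀ w ∈ s, ∃ γ : EL P R, u ∈ elSat up₁ br₁ γ ∧ w ∉ elSat up₂ br₂ γ) :
    ∃ γ : EL P R, u ∈ elSat up₁ br₁ γ ∧ ∀ w ∈ s, w ∉ elSat up₂ br₂ γ := by
  induction s, hs using Set.Finite.induction_on with
  | empty => exact ⟨.top, trivial, fun _ => False.elim⟩
  | @insert a s _ _ ih =>
    obtain ⟨γ, huγ, hsγ⟩ := ih fun w hw => h w (Set.mem_insert_of_mem a hw)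
    obtain ⟨δ, huδ, haδ⟩ := h a (Set.mem_insert a s)
    refine ⟨.and γ δ, ⟨huγ, huδ⟩, ?_⟩
    rintro w (rfl | hw) ⟨hwγ, hwδ⟩
    exacts [haδ hwδ, hsγ w hw hwγ]

theorem isELSim_elSimilar (hfin : ∀ r v, {v' | (v, v') ∈ br₂ r}.Finite) :
    IsELSim up₁ br₁ up₂ br₂ (ELSimilar up₁ br₁ up₂ br₂) := by
  refine ⟨fun u v p huv => huv (.atom p), fun u v u' r huv hr => ?_⟩
  by_contra! hno
  obtain ⟨γ, hu'γ, hγ⟩ := exists_elSat_forall_notMem_of_finite u' (hfin r v) fun v' hv' => by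
    simpa [ELSimilar] using hno v' hv'
  obtain ⟨v', hv', hv'γ⟩ := huv (.ex r γ) ⟨u', hr, hu'γ⟩
  exact hγ v' hv' hv'γ

end

theorem elSimilar_iff_elSim_of_finite_general {P R W₁ W₂ : Type} [Fintype W₂]
    (up₁ : P → Set W₁) (br₁ : R → Set (W₁ × W₁))
    (up₂ : P → Set W₂) (br₂ : R → Set (W₂ × W₂)) (u : W₁) (v : W₂) :
    (∀ γ : EL P R, u ∈ elSat up₁ br₁ γ → v ∈ elSat up₂ br₂ γ) ↔
      ∃ Z : Set (W₁ × W₂), IsELSim up₁ br₁ up₂ br₂ Z ∧ (u, v) ∈ Z :=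
  ⟨fun huv => ⟨_, isELSim_elSimilar fun _ _ => Set.toFinite _, huv⟩,
    fun ⟨_, hZ, huv⟩ => hZ.subset_elSimilar huv⟩

/-- Hennessy–Milner-type theorem for EL: on finite models, EL-similarity
coincides with the existence of an EL-simulation. -/
theorem elSimilar_iff_elSim_of_finite {P R W₁ W₂ : Type} [Fintype W₁] [Fintype W₂]
    (up₁ : P → Set W₁) (br₁ : R → Set (W₁ × W₁))
    (up₂ : P → Set W₂) (br₂ : R → Set (W₂ × W₂)) (u : W₁) (v : W₂) :
    (∀ γ : EL P R, u ∈ elSat up₁ br₁ γ → v ∈ elSat up₂ br₂ γ) ↔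
      ∃ Z : Set (W₁ × W₂), IsELSim up₁ br₁ up₂ br₂ Z ∧ (u, v) ∈ Z :=
  elSimilar_iff_elSim_of_finite_general up₁ br₁ up₂ br₂ u v
end

section
/- (Quotient model preserves formulas) Let M = (Δ, I) be a relational model and let ≡ be the equivalence relation 'u ≡ v iff u ≼_L v and v ≼_L u' for L = ALC (mutual ALC-similarity), on a finite model M. Define the quotient model M_L with domain the set of equivalence classes [u], and ([u₁],[u₂]) ∈ I_L(r) iff (u₁,u₂) ∈ I(r) for some representatives, and [u] ∈ I_L(p) iff u ∈ I(p). Then for every ALC formula γ and every u ∈ Δ: u ∈ [[γ]]_M if and only if [u] ∈ [[γ]]_{M_L}. -/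
inductive ALC (P R : Type) : Type
  | top : ALC P R
  | atom : P → ALC P R
  | not : ALC P R → ALC P R
  | and : ALC P R → ALC P R → ALC P R
  | ex : R → ALC P R → ALC P R

/-- Semantics of ALC over a relational model. -/
def alcSat {P R W : Type} (up : P → Set W) (br : R → Set (W × W)) : ALC P R → Set W
  | .top => Set.univ
  | .atom p => up p
  | .not a => (alcSat up br a)ᶜ
  | .and a b => alcSat up br a ∩ alcSat up br b
  | .ex r a => {u | ∃ v, (u, v) ∈ br r ∧ v ∈ alcSat up br a}

/-! Induction on the formula. Passing to the quotient is immediate; coming back, an atom or an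
`∃ r` edge of `[u]` is witnessed at some other representative `w ≈ u`, and since `≈`-related
worlds satisfy the same formulas, what holds at `w` holds at `u`. -/

section QuotientModel

variable {P R W : Type} (up : P → Set W) (br : R → Set (W × W)) (s : Setoid W)

def quotientAtoms (p : P) : Set (Quotient s) :=
  {q | ∃ w, Quotient.mk s w = q ∧ w ∈ up p}

def quotientRel (r : R) : Set (Quotient s × Quotient s) :=
  {qq | ∃ w₁ w₂, Quotient.mk s w₁ = qq.1 ∧ Quotient.mk s w₂ = qq.2 ∧ (w₁, w₂) ∈ br r}

variable {up br s}

theorem alcSat_quotient_iff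
    (hs : ∀ u v : W, u ≈ v → ∀ γ : ALC P R, u ∈ alcSat up br γ → v ∈ alcSat up br γ) :
    ∀ (γ : ALC P R) (u : W),
      u ∈ alcSat up br γ ↔ Quotient.mk s u ∈ alcSat (quotientAtoms up s) (quotientRel br s) γ
  | .top, _ => Iff.rfl
  | .atom p, u => by
    refine ⟨fun hu => ⟨u, rfl, hu⟩, ?_⟩
    rintro ⟨w, hwu, hw⟩
    exact hs w u (Quotient.exact hwu) (.atom p) hw
  | .not a, u => not_congr (alcSat_quotient_iff hs a u)
  | .and a b, u => and_congr (alcSat_quotient_iff hs a u) (alcSat_quotient_iff hs b u)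
  | .ex r a, u => by
    constructor
    · rintro ⟨v, huv, hv⟩
      exact ⟨Quotient.mk s v, ⟨u, v, rfl, rfl, huv⟩, (alcSat_quotient_iff hs a v).mp hv⟩
    · rintro ⟨_, ⟨w₁, w₂, hw₁u, rfl, hw₁w₂⟩, hw₂⟩
      have hw₁ : w₁ ∈ alcSat up br (.ex r a) :=
        ⟨w₂, hw₁w₂, (alcSat_quotient_iff hs a w₂).mpr hw₂⟩
      exact hs w₁ u (Quotient.exact hw₁u) _ hw₁

end QuotientModel

theorem quotient_preserves_alc_general {P R W : Type}
    (up : P → Set W) (br : R → Set (W × W)) (s : Setoid W)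
    (hs : ∀ u v : W, s.r u v ↔
      ((∀ γ : ALC P R, u ∈ alcSat up br γ → v ∈ alcSat up br γ) ∧
       (∀ γ : ALC P R, v ∈ alcSat up br γ → u ∈ alcSat up br γ))) :
    ∀ (γ : ALC P R) (u : W),
      u ∈ alcSat up br γ ↔
        Quotient.mk s u ∈ alcSat
          (fun p => {q : Quotient s | ∃ w, Quotient.mk s w = q ∧ w ∈ up p})
          (fun r => {qq : Quotient s × Quotient s |
            ∃ w₁ w₂, Quotient.mk s w₁ = qq.1 ∧ Quotient.mk s w₂ = qq.2 ∧ (w₁, w₂) ∈ br r})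
          γ :=
  alcSat_quotient_iff fun u v huv => ((hs u v).mp huv).1

/-- Quotienting a finite model by mutual ALC-similarity preserves all ALC formulas. -/
theorem quotient_preserves_alc {P R W : Type} [Fintype W]
    (up : P → Set W) (br : R → Set (W × W)) (s : Setoid W)
    (hs : ∀ u v : W, s.r u v ↔
      ((∀ γ : ALC P R, u ∈ alcSat up br γ → v ∈ alcSat up br γ) ∧
       (∀ γ : ALC P R, v ∈ alcSat up br γ → u ∈ alcSat up br γ))) :
    ∀ (γ : ALC P R) (u : W),
      u ∈ alcSat up br γ ↔
        Quotient.mk s u ∈ alcSat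
          (fun p => {q : Quotient s | ∃ w, Quotient.mk s w = q ∧ w ∈ up p})
          (fun r => {qq : Quotient s × Quotient s |
            ∃ w₁ w₂, Quotient.mk s w₁ = qq.1 ∧ Quotient.mk s w₂ = qq.2 ∧ (w₁, w₂) ∈ br r})
          γ :=
  quotient_preserves_alc_general up br s hs
end

section
/- (Exact description of an element of a finite tree) Let M = (Δ, I) be a finite relational model whose binary relations form a tree rooted at v (every element is reachable from v by a unique path). Define recursively φ(u) = (⋀_{u ∈ I(p)} p) ∧ ⋀_{(u,u') ∈ I(r)} ∃r.φ(u'). Then v ∈ [[φ(v)]]_M. Moreover, for any relational model N and element w, w ∈ [[φ(v)]]_N if and only if there exists an EL-simulation Z from M to N with v Z w. -/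
/-- Conjunction of a finite list of EL formulas (`⊤` for the empty list). -/
def conjList {P R : Type} : List (EL P R) → EL P R
  | [] => .top
  | a :: l => .and a (conjList l)

/-- `validPath br w l`: the list of steps `l` is an actual path in the model starting at `w`. -/
def validPath {R W : Type} (br : R → Set (W × W)) : W → List (R × W) → Prop
  | _, [] => True
  | w, (r, u) :: l => (w, u) ∈ br r ∧ validPath br u l

/-- The last element of a path starting at `w`. -/
def pathLast {R W : Type} : W → List (R × W) → W
  | w, [] => w
  | _, (_, u) :: l => pathLast u l

/-!
The formula `φ u` says exactly that `u`'s atoms hold and that every `r`-edge `u → u'` can be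
matched by an `r`-edge into a point satisfying `φ u'`. Hence the points satisfying `φ u` form
an EL-simulation, and conversely every simulation pair `(u, w)` satisfies `w ⊨ φ u`, by
well-founded induction from the leaves of the tree. The root satisfies its own description
through the identity simulation.
-/

lemma elSat_conjList {P R W : Type} (up : P → Set W) (br : R → Set (W × W))
    (l : List (EL P R)) (w : W) :
    w ∈ elSat up br (conjList l) ↔ ∀ a ∈ l, w ∈ elSat up br a := by
  induction l with
  | nil => simp [conjList, elSat]
  | cons a l ih => simp [conjList, elSat, ih]

lemma isELSim_diagonal {P R W : Type} (up : P → Set W) (br : R → Set (W × W)) :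
    IsELSim up br up br (Set.diagonal W) := by
  refine ⟨fun u w p (huw : u = w) hu => huw ▸ hu, fun u w u' r (huw : u = w) hr => ?_⟩
  exact ⟨u', huw ▸ hr, Set.mem_diagonal u'⟩

section Paths

variable {R W : Type} (br : R → Set (W × W))

lemma pathLast_append (w : W) (l₁ l₂ : List (R × W)) :
    pathLast w (l₁ ++ l₂) = pathLast (pathLast w l₁) l₂ := by
  induction l₁ generalizing w with
  | nil => rfl
  | cons a l ih => exact ih a.2

lemma validPath_append (w : W) (l₁ l₂ : List (R × W)) :
    validPath br w (l₁ ++ l₂) ↔ validPath br w l₁ ∧ validPath br (pathLast w l₁) l₂ := by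
  induction l₁ generalizing w with
  | nil => simp [validPath, pathLast]
  | cons a l ih => simp [validPath, pathLast, ih, and_assoc]

lemma wellFounded_child_of_existsUnique_path [Finite W] (v : W)
    (htree : ∀ u, ∃! l, validPath br v l ∧ pathLast v l = u) :
    WellFounded fun u' u => ∃ r, (u, u') ∈ br r := by
  choose path hpath using fun u => (htree u).exists
  have hdepth : ∀ u u' r, (u, u') ∈ br r → (path u).length < (path u').length := by
    intro u u' r hr
    have hext : validPath br v (path u ++ [(r, u')]) ∧ pathLast v (path u ++ [(r, u')]) = u' := by
      rw [validPath_append, pathLast_append, (hpath u).2]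
      exact ⟨⟨(hpath u).1, hr, trivial⟩, rfl⟩
    rw [(htree u').unique (hpath u') hext, List.length_append]
    exact Nat.lt_succ_self _
  refine Subrelation.wf (r := InvImage (· > ·) fun u => (path u).length) ?_
    (Finite.wellFounded_of_trans_of_irrefl _)
  rintro u' u ⟨r, hr⟩
  exact hdepth u u' r hr

end Paths

def IsDescription {P R W : Type} [Fintype P] [Fintype R] [Fintype W] [DecidableEq W]
    (up : P → Finset W) (br : R → Finset (W × W)) (φ : W → EL P R) : Prop :=
  ∀ u : W, φ u = .and
    (conjList ((Finset.univ : Finset P).toList.filterMap fun p =>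
      if u ∈ up p then some (.atom p) else none))
    (conjList ((Finset.univ : Finset R).toList.flatMap fun r =>
      (Finset.univ : Finset W).toList.filterMap fun u' =>
        if (u, u') ∈ br r then some (.ex r (φ u')) else none))

namespace IsDescription

variable {P R W W' : Type} [Fintype P] [Fintype R] [Fintype W] [DecidableEq W]
  {up : P → Finset W} {br : R → Finset (W × W)} {φ : W → EL P R}
  {up' : P → Set W'} {br' : R → Set (W' × W')}

lemma mem_elSat_iff (hφ : IsDescription up br φ) (u : W) (w : W') :
    w ∈ elSat up' br' (φ u) ↔ (∀ p, u ∈ up p → w ∈ up' p) ∧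
      ∀ r u', (u, u') ∈ br r → ∃ w', (w, w') ∈ br' r ∧ w' ∈ elSat up' br' (φ u') := by
  rw [hφ u]
  simp only [elSat, Set.mem_inter_iff, elSat_conjList, List.mem_filterMap, List.mem_flatMap,
    Finset.mem_toList, Finset.mem_univ, true_and, Option.ite_none_right_eq_some,
    Option.some.injEq, forall_exists_index, and_imp]
  refine and_congr ⟨fun h p hp => h _ p hp rfl, ?_⟩ ⟨fun h r u' hr => h _ r u' hr rfl, ?_⟩
  · rintro h _ p hp rfl
    exact h p hp
  · rintro h _ r u' hr rfl
    exact h r u' hr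

lemma isELSim_elSat (hφ : IsDescription up br φ) :
    IsELSim (fun p => (↑(up p) : Set W)) (fun r => (↑(br r) : Set (W × W))) up' br'
      {q | q.2 ∈ elSat up' br' (φ q.1)} :=
  ⟨fun u w p huw hu => ((hφ.mem_elSat_iff u w).1 huw).1 p hu,
    fun u w u' r huw hr => ((hφ.mem_elSat_iff u w).1 huw).2 r u' hr⟩

lemma mem_elSat_of_isELSim (hφ : IsDescription up br φ)
    (hwf : WellFounded fun u' u => ∃ r, (u, u') ∈ br r) {Z : Set (W × W')}
    (hZ : IsELSim (fun p => (↑(up p) : Set W)) (fun r => (↑(br r) : Set (W × W))) up' br' Z)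
    {u : W} {w : W'} (huw : (u, w) ∈ Z) : w ∈ elSat up' br' (φ u) := by
  induction u using hwf.induction generalizing w with
  | _ u ih =>
    rw [hφ.mem_elSat_iff]
    refine ⟨fun p hp => hZ.1 u w p huw hp, fun r u' hr => ?_⟩
    obtain ⟨w', hww', hZ'⟩ := hZ.2 u w u' r huw hr
    exact ⟨w', hww', ih u' ⟨r, hr⟩ hZ'⟩

end IsDescription

theorem tree_exact_description_general {P R W : Type} [Fintype P] [Fintype R] [Fintype W]
    [DecidableEq W]
    (up : P → Finset W) (br : R → Finset (W × W)) (v : W)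
    (htree : ∀ u : W, ∃! l : List (R × W),
      validPath (fun r => (↑(br r) : Set (W × W))) v l ∧ pathLast v l = u)
    (φ : W → EL P R)
    (hφ : ∀ u : W, φ u = .and
      (conjList ((Finset.univ : Finset P).toList.filterMap fun p =>
        if u ∈ up p then some (.atom p) else none))
      (conjList ((Finset.univ : Finset R).toList.flatMap fun r =>
        (Finset.univ : Finset W).toList.filterMap fun u' =>
          if (u, u') ∈ br r then some (.ex r (φ u')) else none))) :
    v ∈ elSat (fun p => (↑(up p) : Set W)) (fun r => (↑(br r) : Set (W × W))) (φ v) ∧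
    ∀ (W' : Type) (up' : P → Set W') (br' : R → Set (W' × W')) (w : W'),
      w ∈ elSat up' br' (φ v) ↔
        ∃ Z : Set (W × W'),
          IsELSim (fun p => (↑(up p) : Set W)) (fun r => (↑(br r) : Set (W × W)))
            up' br' Z ∧ (v, w) ∈ Z := by
  have hdesc : IsDescription up br φ := hφ
  have hwf : WellFounded fun u' u => ∃ r, (u, u') ∈ br r :=
    wellFounded_child_of_existsUnique_path _ v htree
  refine ⟨hdesc.mem_elSat_of_isELSim hwf (isELSim_diagonal _ _) (Set.mem_diagonal v),
    fun W' up' br' w => ⟨fun hw => ⟨_, hdesc.isELSim_elSat, hw⟩, ?_⟩⟩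
  rintro ⟨Z, hZ, hvw⟩
  exact hdesc.mem_elSat_of_isELSim hwf hZ hvw

/-- Exact description of the root of a finite tree-shaped model: the recursively defined
formula `φ v` is true at `v`, and in any model `N` it is true at `w` iff there is an
EL-simulation from `M` to `N` relating `v` to `w`. -/
theorem tree_exact_description {P R W : Type} [Fintype P] [Fintype R] [Fintype W]
    [DecidableEq W] [DecidableEq R]
    (up : P → Finset W) (br : R → Finset (W × W)) (v : W)
    (htree : ∀ u : W, ∃! l : List (R × W),
      validPath (fun r => (↑(br r) : Set (W × W))) v l ∧ pathLast v l = u)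
    (φ : W → EL P R)
    (hφ : ∀ u : W, φ u = .and
      (conjList ((Finset.univ : Finset P).toList.filterMap fun p =>
        if u ∈ up p then some (.atom p) else none))
      (conjList ((Finset.univ : Finset R).toList.flatMap fun r =>
        (Finset.univ : Finset W).toList.filterMap fun u' =>
          if (u, u') ∈ br r then some (.ex r (φ u')) else none))) :
    v ∈ elSat (fun p => (↑(up p) : Set W)) (fun r => (↑(br r) : Set (W × W))) (φ v) ∧
    ∀ (W' : Type) (up' : P → Set W') (br' : R → Set (W' × W')) (w : W'),
      w ∈ elSat up' br' (φ v) ↔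
        ∃ Z : Set (W × W'),
          IsELSim (fun p => (↑(up p) : Set W)) (fun r => (↑(br r) : Set (W × W)))
            up' br' Z ∧ (v, w) ∈ Z :=
  tree_exact_description_general up br v htree φ hφ
end

section
/- (Invariant preservation in the refinement step) Let M = (Δ, I) be a relational model and suppose S : Δ → Set Δ and F : Δ → EL-formulas satisfy, for all u,v ∈ Δ: v ∈ [[F(v)]] and [[F(u)]] ⊆ S(u). Suppose u, v, w ∈ Δ and a binary relation r are such that (u,v) ∈ I(r), w ∈ S(u), and there is no w' with (w,w') ∈ I(r) and w' ∈ S(v). Then the updated formula F'(u) = F(u) ∧ ∃r.F(v) satisfies: u ∈ [[F'(u)]] and [[F'(u)]] ⊆ S(u) \ {w}. -/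
section

variable {P R W : Type} {up : P → Set W} {br : R → Set (W × W)}

theorem mem_elSat_ex {r : R} {φ : EL P R} {u v : W} (huv : (u, v) ∈ br r)
    (hv : v ∈ elSat up br φ) : u ∈ elSat up br (.ex r φ) :=
  ⟨v, huv, hv⟩

theorem notMem_elSat_ex_of_subset {r : R} {φ : EL P R} {A : Set W} {w : W}
    (hφA : elSat up br φ ⊆ A) (hno : ¬∃ w', (w, w') ∈ br r ∧ w' ∈ A) :
    w ∉ elSat up br (.ex r φ) := by
  rintro ⟨w', hww', hw'⟩
  exact hno ⟨w', hww', hφA hw'⟩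

end

theorem refinement_step_invariant_general {P R W : Type}
    (up : P → Set W) (br : R → Set (W × W))
    (S : W → Set W) (F : W → EL P R)
    (hF : ∀ x : W, x ∈ elSat up br (F x))
    (hFS : ∀ x : W, elSat up br (F x) ⊆ S x)
    (u v w : W) (r : R)
    (huv : (u, v) ∈ br r)
    (hno : ¬∃ w', (w, w') ∈ br r ∧ w' ∈ S v) :
    u ∈ elSat up br (.and (F u) (.ex r (F v))) ∧
    elSat up br (.and (F u) (.ex r (F v))) ⊆ S u \ {w} := by
  refine ⟨⟨hF u, mem_elSat_ex huv (hF v)⟩, ?_⟩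
  rintro x ⟨hxu, hxv⟩
  refine ⟨hFS u hxu, fun hxw => ?_⟩
  subst hxw
  exact notMem_elSat_ex_of_subset (hFS v) hno hxv

/-- Preservation of the loop invariant in the refinement step: if the invariant holds,
`(u,v) ∈ r`, `w ∈ S(u)`, and no `r`-successor of `w` lies in `S(v)`, then the updated
formula `F(u) ∧ ∃r.F(v)` is true at `u` and its extension is contained in `S(u) \ {w}`. -/
theorem refinement_step_invariant {P R W : Type}
    (up : P → Set W) (br : R → Set (W × W))
    (S : W → Set W) (F : W → EL P R)
    (hF : ∀ x : W, x ∈ elSat up br (F x))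
    (hFS : ∀ x : W, elSat up br (F x) ⊆ S x)
    (u v w : W) (r : R)
    (huv : (u, v) ∈ br r) (hw : w ∈ S u)
    (hno : ¬∃ w', (w, w') ∈ br r ∧ w' ∈ S v) :
    u ∈ elSat up br (.and (F u) (.ex r (F v))) ∧
    elSat up br (.and (F u) (.ex r (F v))) ⊆ S u \ {w} :=
  refinement_step_invariant_general up br S F hF hFS u v w r huv hno
end
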